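/- arXiv:0812.2043 — 3 statements merged into one kernel-verified Lean document; each statement's English description precedes it below -/
import Mathlib

section
/- Let Δ ∈ Z_p[X_1,...,X_n] be a homogeneous polynomial of degree d ≥ 1 and A an F_p-algebra. Then for any a_1,...,a_n ∈ W(A), Δ(V(a_1),...,V(a_n)) = F^{d-1}(V^d(Δ(a_1,...,a_n))). -/
/-!
In characteristic `p` one has `V x * V^[k] y = V^[k+1] (F^[k] x * F y)`, so a product of `k`
Verschiebungs is `V^[k] (F^[k-1] (product))`. Applied to the monomials of `Δ`, all of degree `d`,
this gives `c * V^[d] (F^[d-1] Q) = V^[d] (F^[d] c * F^[d-1] Q)` for each term `c * Q`, and the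
coefficients `c` come from `W(𝔽_p)`, where `F` is the identity.
-/

open WittVector

open Function MvPolynomial

theorem AddMonoidHom.iterate_map_sum {M ι : Type*} [AddCommMonoid M] (f : M →+ M) (n : ℕ)
    (s : Finset ι) (g : ι → M) : f^[n] (∑ i ∈ s, g i) = ∑ i ∈ s, f^[n] (g i) := by
  induction n with
  | zero => rfl
  | succ n ih => simp only [iterate_succ_apply', ih, map_sum]

theorem Finsupp.prod_pow_eq_prod_map_toMultiset {σ M : Type*} [CommMonoid M] (m : σ →₀ ℕ)
    (x : σ → M) : (m.prod fun i e => x i ^ e) = ((Finsupp.toMultiset m).map x).prod := by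
  rw [Finsupp.toMultiset_map, Finsupp.prod_toMultiset,
    Finsupp.prod_mapDomain_index (fun _ => pow_zero _) (fun _ _ _ => pow_add _ _ _)]

namespace WittVector

variable {p : ℕ} [Fact p.Prime] {A : Type*} [CommRing A]

local notation "𝕎" => WittVector p

section CharP

variable [CharP A p]

theorem frobenius_map_zmodp (f : ZMod p →+* A) (c : 𝕎 (ZMod p)) :
    frobenius (map f c) = map f c := by
  ext n
  rw [coeff_frobenius_charP, map_coeff, ← map_pow, ZMod.pow_card]

theorem verschiebung_mul_prod_map_verschiebung (x : 𝕎 A) (M : Multiset (𝕎 A)) :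
    verschiebung x * (M.map verschiebung).prod =
      verschiebung^[M.card + 1] (frobenius^[M.card] (x * M.prod)) := by
  induction M using Multiset.induction generalizing x with
  | empty => simp
  | cons y M ih =>
    have hV := iterate_verschiebung_mul y (frobenius^[M.card] (x * M.prod)) 1 (M.card + 1)
    rw [iterate_one, iterate_one] at hV
    rw [Multiset.map_cons, Multiset.prod_cons, mul_left_comm, ih, hV,
      ← iterate_succ_apply' frobenius, ← RingHom.coe_pow, ← map_mul, Multiset.card_cons,
      Multiset.prod_cons, mul_left_comm x y, add_comm 1, RingHom.coe_pow]

theorem prod_map_verschiebung (M : Multiset (𝕎 A)) :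
    (M.map verschiebung).prod = verschiebung^[M.card] (frobenius^[M.card - 1] M.prod) := by
  induction M using Multiset.induction with
  | empty => simp
  | cons x M _ =>
    rw [Multiset.map_cons, Multiset.prod_cons, verschiebung_mul_prod_map_verschiebung,
      Multiset.card_cons, Multiset.prod_cons, Nat.add_sub_cancel]

theorem prod_pow_verschiebung {σ : Type*} (m : σ →₀ ℕ) (x : σ → 𝕎 A) :
    (m.prod fun i e => verschiebung (x i) ^ e) =
      verschiebung^[m.degree] (frobenius^[m.degree - 1] (m.prod fun i e => x i ^ e)) := by
  have hcard : (Finsupp.toMultiset m).card = m.degree := Finsupp.card_toMultiset m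
  have hmap : (Finsupp.toMultiset m).map (fun i => verschiebung (x i)) =
      ((Finsupp.toMultiset m).map x).map verschiebung := (Multiset.map_map _ _ _).symm
  rw [Finsupp.prod_pow_eq_prod_map_toMultiset, Finsupp.prod_pow_eq_prod_map_toMultiset, hmap,
    prod_map_verschiebung, Multiset.card_map, hcard]

theorem eval₂_verschiebung_of_isHomogeneous {R σ : Type*} [CommSemiring R] (f : R →+* 𝕎 A)
    (hf : ∀ r, frobenius (f r) = f r) {Δ : MvPolynomial σ R} {d : ℕ} (hΔ : Δ.IsHomogeneous d)
    (a : σ → 𝕎 A) :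
    eval₂ f (fun i => verschiebung (a i)) Δ =
      frobenius^[d - 1] (verschiebung^[d] (eval₂ f a Δ)) := by
  rw [← (verschiebung_frobenius_comm.iterate_iterate d (d - 1)).eq, eval₂_eq, eval₂_eq,
    ← RingHom.coe_pow, map_sum, AddMonoidHom.iterate_map_sum]
  refine Finset.sum_congr rfl fun m hm => ?_
  have hdeg : m.degree = d := by
    rw [Finsupp.degree_eq_weight_one]; exact hΔ (mem_support_iff.mp hm)
  have hprod := prod_pow_verschiebung m a
  simp only [Finsupp.prod, hdeg] at hprod
  rw [hprod, mul_comm, iterate_verschiebung_mul_left, iterate_fixed (hf _), map_mul,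
    RingHom.coe_pow, iterate_fixed (hf _), mul_comm]

end CharP

end WittVector

theorem stmt5_general (p : ℕ) [Fact p.Prime] (A : Type*) [CommRing A] [Algebra (ZMod p) A]
    (n d : ℕ)
    (Δ : MvPolynomial (Fin n) (WittVector p (ZMod p))) (hΔ : Δ.IsHomogeneous d)
    (a : Fin n → WittVector p A) :
    MvPolynomial.eval₂ (WittVector.map (algebraMap (ZMod p) A))
        (fun i => verschiebung (a i)) Δ =
      (⇑(frobenius (p := p) (R := A)))^[d - 1]
        ((⇑verschiebung)^[d]
          (MvPolynomial.eval₂ (WittVector.map (algebraMap (ZMod p) A)) a Δ)) := by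
  obtain _ | _ := subsingleton_or_nontrivial A
  · have : Subsingleton (WittVector p A) := ⟨fun x y => by ext n; exact Subsingleton.elim _ _⟩
    exact Subsingleton.elim _ _
  have : CharP A p := charP_of_injective_algebraMap (algebraMap (ZMod p) A).injective p
  exact eval₂_verschiebung_of_isHomogeneous _ (frobenius_map_zmodp _) hΔ a

/-- Let `Δ ∈ ℤ_p[X_1,…,X_n]` (with `ℤ_p = W(𝔽_p)`) be a homogeneous polynomial of
degree `d ≥ 1` and `A` an `𝔽_p`-algebra.  Then for all `a_1,…,a_n ∈ W(A)`,
`Δ(V a_1, …, V a_n) = F^{d-1}(V^d(Δ(a_1,…,a_n)))`. -/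
theorem stmt5 (p : ℕ) [Fact p.Prime] (A : Type*) [CommRing A] [Algebra (ZMod p) A]
    (n d : ℕ) (hd : 1 ≤ d)
    (Δ : MvPolynomial (Fin n) (WittVector p (ZMod p))) (hΔ : Δ.IsHomogeneous d)
    (a : Fin n → WittVector p A) :
    MvPolynomial.eval₂ (WittVector.map (algebraMap (ZMod p) A))
        (fun i => verschiebung (a i)) Δ =
      (⇑(frobenius (p := p) (R := A)))^[d - 1]
        ((⇑verschiebung)^[d]
          (MvPolynomial.eval₂ (WittVector.map (algebraMap (ZMod p) A)) a Δ)) :=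
  stmt5_general p A n d Δ hΔ a
end

section
/- Let p be a prime and f ∈ Z_p[X] such that the reduction f̄ ∈ F_p[X] is separable and non-constant. Then for every n ≥ 1, the Haar measure of the set {x ∈ Z_p : v_p(f(x)) ≥ n} equals m·p^{-n}, where m is the number of roots of f̄ in F_p. -/
/-!
By Hensel's lemma each root `a` of `f̄` lifts to a root `z_a` of `f` at which `f'` is a unit, and
the Taylor expansion at `z_a` gives `‖f x‖ = ‖x - z_a‖` on the residue disc of `a`; off these
discs `‖f x‖ = 1`. Hence for `n ≥ 1` the set `{‖f x‖ ≤ p^{-n}}` is the disjoint union of the `m`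
closed balls of radius `p^{-n}` around the `z_a`, and each such ball has measure `p^{-n}` because
`ℤ_[p]` is the disjoint union of `p^n` translates of it (the fibres of `ℤ_[p] → ℤ/p^n`).
-/

open MeasureTheory Polynomial Metric
open scoped ENNReal

namespace PadicInt

variable {p : ℕ} [Fact p.Prime]

theorem norm_lt_one_iff_toZMod_eq_zero {x : ℤ_[p]} : ‖x‖ < 1 ↔ toZMod x = 0 := by
  rw [norm_lt_one_iff_dvd, ← Ideal.mem_span_singleton, ← maximalIdeal_eq_span_p, ← ker_toZMod,
    RingHom.mem_ker]

theorem norm_eq_one_iff_toZMod_ne_zero {x : ℤ_[p]} : ‖x‖ = 1 ↔ toZMod x ≠ 0 := by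
  rw [Ne, ← norm_lt_one_iff_toZMod_eq_zero, not_lt]
  exact ⟨ge_of_eq, (norm_le_one x).antisymm⟩

theorem norm_sub_lt_one_iff {x y : ℤ_[p]} : ‖x - y‖ < 1 ↔ toZMod x = toZMod y := by
  rw [norm_lt_one_iff_toZMod_eq_zero, map_sub, sub_eq_zero]

theorem disjoint_closedBall_of_toZMod_ne {x y : ℤ_[p]} (h : toZMod x ≠ toZMod y) {r : ℝ}
    (hr : r < 1) : Disjoint (closedBall x r) (closedBall y r) := by
  refine Set.disjoint_left.2 fun w hwx hwy => h ?_
  rw [mem_closedBall, dist_eq_norm] at hwx hwy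
  exact (norm_sub_lt_one_iff.1 (hwx.trans_lt hr)).symm.trans
    (norm_sub_lt_one_iff.1 (hwy.trans_lt hr))

theorem closedBall_pow_eq_preimage_toZModPow (x : ℤ_[p]) (n : ℕ) :
    closedBall x ((p : ℝ) ^ (-(n : ℤ))) = toZModPow n ⁻¹' {toZModPow n x} := by
  ext y
  rw [mem_closedBall, dist_eq_norm, norm_le_pow_iff_mem_span_pow, ← ker_toZModPow,
    RingHom.mem_ker, map_sub, sub_eq_zero]
  rfl

theorem measure_closedBall_pow [MeasurableSpace ℤ_[p]] [BorelSpace ℤ_[p]] (μ : Measure ℤ_[p])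
    [μ.IsAddHaarMeasure] [IsProbabilityMeasure μ] (x : ℤ_[p]) (n : ℕ) :
    μ (closedBall x ((p : ℝ) ^ (-(n : ℤ)))) = ((p : ℝ≥0∞) ^ n)⁻¹ := by
  have : NeZero (p ^ n) := ⟨pow_ne_zero n (Fact.out : p.Prime).ne_zero⟩
  have hfiber (j : ZMod (p ^ n)) :
      μ (toZModPow n ⁻¹' {j}) = μ (closedBall 0 ((p : ℝ) ^ (-(n : ℤ)))) := by
    obtain ⟨y, rfl⟩ := ZMod.ringHom_surjective (toZModPow n) j
    rw [← closedBall_pow_eq_preimage_toZModPow, Measure.addHaar_closedBall_center]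
  have hcover := sum_measure_preimage_singleton (μ := μ) Finset.univ (f := toZModPow n)
    fun j _ => by
      obtain ⟨y, rfl⟩ := ZMod.ringHom_surjective (toZModPow n) j
      rw [← closedBall_pow_eq_preimage_toZModPow]
      exact measurableSet_closedBall
  simp only [hfiber, Finset.sum_const, Finset.card_univ, ZMod.card, nsmul_eq_mul,
    Finset.coe_univ, Set.preimage_univ, measure_univ, Nat.cast_pow] at hcover
  rw [Measure.addHaar_closedBall_center]
  exact ENNReal.eq_inv_of_mul_eq_one_left (by rwa [mul_comm])

variable {f : ℤ_[p][X]}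

theorem exists_lift_root_of_separable (hsep : (f.map toZMod).Separable) {a : ZMod p}
    (ha : (f.map toZMod).eval a = 0) :
    ∃ z : ℤ_[p], f.eval z = 0 ∧ toZMod z = a ∧ ‖f.derivative.eval z‖ = 1 := by
  obtain ⟨x, rfl⟩ := ZMod.ringHom_surjective toZMod a
  have hx : ‖f.derivative.eval x‖ = 1 := by
    rw [norm_eq_one_iff_toZMod_ne_zero, ← eval_map_apply, ← derivative_map]
    exact hsep.eval₂_derivative_ne_zero (RingHom.id _) ha
  have hfx : ‖f.eval x‖ < ‖f.derivative.eval x‖ ^ 2 := by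
    rwa [hx, one_pow, norm_lt_one_iff_toZMod_eq_zero, ← eval_map_apply]
  obtain ⟨z, hz, hzx, hz', -⟩ := hensels_lemma (F := f) (a := x) (by simpa using hfx)
  simp only [coe_aeval_eq_eval, hx] at hz hzx hz'
  exact ⟨z, hz, norm_sub_lt_one_iff.1 hzx, hz'⟩

theorem norm_eval_eq_norm_sub {z x : ℤ_[p]} (hz : f.eval z = 0)
    (hz' : ‖f.derivative.eval z‖ = 1) (hx : ‖x - z‖ < 1) : ‖f.eval x‖ = ‖x - z‖ := by
  obtain ⟨k, hk⟩ := f.binomExpansion z (x - z)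
  rw [add_sub_cancel, hz, zero_add] at hk
  rcases eq_or_ne x z with rfl | hxz
  · simp [hz]
  have hlin : ‖f.derivative.eval z * (x - z)‖ = ‖x - z‖ := by rw [norm_mul, hz', one_mul]
  have hquad : ‖k * (x - z) ^ 2‖ < ‖x - z‖ :=
    calc ‖k * (x - z) ^ 2‖ ≤ ‖x - z‖ ^ 2 := by
          rw [norm_mul, norm_pow]
          exact mul_le_of_le_one_left (by positivity) (norm_le_one k)
      _ < ‖x - z‖ := pow_lt_self_of_lt_one₀ (norm_pos_iff.2 (sub_ne_zero.2 hxz)) hx one_lt_two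
  rw [hk, norm_add_eq_max_of_ne (hlin ▸ hquad.ne'), hlin, max_eq_left hquad.le]

theorem exists_setOf_norm_eval_le_eq_biUnion_closedBall (hsep : (f.map toZMod).Separable) :
    ∃ z : ZMod p → ℤ_[p],
      (∀ a ∈ Finset.univ.filter fun a => (f.map toZMod).eval a = 0, toZMod (z a) = a) ∧
      ∀ r < 1, {x | ‖f.eval x‖ ≤ r} =
        ⋃ a ∈ Finset.univ.filter fun a => (f.map toZMod).eval a = 0, closedBall (z a) r := by
  choose! z hz₀ hz hz' using
    fun a (ha : a ∈ Finset.univ.filter fun a => (f.map toZMod).eval a = 0) =>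
      exists_lift_root_of_separable hsep (Finset.mem_filter.1 ha).2
  refine ⟨z, hz, fun r hr => ?_⟩
  ext x
  simp only [Set.mem_ofPred_eq, Set.mem_iUnion, mem_closedBall, dist_eq_norm, exists_prop]
  constructor
  · intro hx
    have hroot : toZMod x ∈ Finset.univ.filter fun a => (f.map toZMod).eval a = 0 := by
      rw [Finset.mem_filter, eval_map_apply, ← norm_lt_one_iff_toZMod_eq_zero]
      exact ⟨Finset.mem_univ _, hx.trans_lt hr⟩
    refine ⟨toZMod x, hroot, ?_⟩
    rwa [← norm_eval_eq_norm_sub (hz₀ _ hroot) (hz' _ hroot)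
      (norm_sub_lt_one_iff.2 (hz _ hroot).symm)]
  · rintro ⟨a, ha, hx⟩
    rwa [norm_eval_eq_norm_sub (hz₀ a ha) (hz' a ha) (hx.trans_lt hr)]

end PadicInt

theorem stmt13_general (p : ℕ) [Fact p.Prime] [MeasurableSpace ℤ_[p]] [BorelSpace ℤ_[p]]
    (μ : Measure ℤ_[p]) [μ.IsAddHaarMeasure] [IsProbabilityMeasure μ]
    (f : Polynomial ℤ_[p])
    (hsep : (f.map (PadicInt.toZMod (p := p))).Separable)
    (n : ℕ) (hn : 1 ≤ n) :
    μ {x : ℤ_[p] | ‖f.eval x‖ ≤ (p : ℝ) ^ (-(n : ℤ))} =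
      ((Finset.univ.filter
        fun a : ZMod p => (f.map (PadicInt.toZMod (p := p))).eval a = 0).card : ENNReal)
        * ((p : ENNReal) ^ n)⁻¹ := by
  obtain ⟨z, hz, hset⟩ := PadicInt.exists_setOf_norm_eval_le_eq_biUnion_closedBall hsep
  have hr : (p : ℝ) ^ (-(n : ℤ)) < 1 :=
    zpow_lt_one_of_neg₀ (mod_cast (Fact.out : p.Prime).one_lt) (by omega)
  have hdisj : Set.PairwiseDisjoint _ fun a => closedBall (z a) ((p : ℝ) ^ (-(n : ℤ))) :=
    fun a ha b hb hab => PadicInt.disjoint_closedBall_of_toZMod_ne (by rwa [hz a ha, hz b hb]) hr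
  rw [hset _ hr, measure_biUnion_finset hdisj fun _ _ => measurableSet_closedBall]
  simp only [PadicInt.measure_closedBall_pow, Finset.sum_const, nsmul_eq_mul]

/-- Let `f ∈ ℤ_p[X]` have separable non-constant reduction `f̄ ∈ 𝔽_p[X]`.  Then for
every `n ≥ 1` the Haar measure of `{x ∈ ℤ_p : v_p(f(x)) ≥ n}` equals `m·p^{-n}`,
where `m` is the number of roots of `f̄` in `𝔽_p`. -/
theorem stmt13 (p : ℕ) [Fact p.Prime] [MeasurableSpace ℤ_[p]] [BorelSpace ℤ_[p]]
    (μ : Measure ℤ_[p]) [μ.IsAddHaarMeasure] [IsProbabilityMeasure μ]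
    (f : Polynomial ℤ_[p])
    (hsep : (f.map (PadicInt.toZMod (p := p))).Separable)
    (hdeg : 0 < (f.map (PadicInt.toZMod (p := p))).natDegree)
    (n : ℕ) (hn : 1 ≤ n) :
    μ {x : ℤ_[p] | ‖f.eval x‖ ≤ (p : ℝ) ^ (-(n : ℤ))} =
      ((Finset.univ.filter
        fun a : ZMod p => (f.map (PadicInt.toZMod (p := p))).eval a = 0).card : ENNReal)
        * ((p : ENNReal) ^ n)⁻¹ :=
  stmt13_general p μ f hsep n hn
end

section
/- For any prime p, ∫_{Z_p²} |(x₁ + x₂)(x₁ − (p−1)x₂)|_p dx₁ dx₂ = (p² + p − 1)/(p+1)², with respect to the Haar probability measure on Z_p². -/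
/-!
Translating `x₁ ↦ x₁ - x₂` turns the inner integral into `∫ ‖x (x - p z)‖ dx`. The integrand is `1`
on the units of `ℤ_[p]`, a set of measure `1 - 1/p`, while on `pℤ_[p]` the substitution `x = p y`,
which scales Haar measure by `1/p`, turns it into `p⁻³ ∫ ‖y‖ ‖y - z‖ dy`. Integrating over `z`,
translation invariance gives `(∫ ‖x‖)²`, and the same self-similarity gives `∫ ‖x‖ = p/(p+1)`.
-/

open MeasureTheory Set
open scoped ENNReal

lemma Continuous.integrable_of_compactSpace {X E : Type*} [TopologicalSpace X] [CompactSpace X]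
    [MeasurableSpace X] [OpensMeasurableSpace X] [NormedAddCommGroup E] {μ : Measure X}
    [IsFiniteMeasure μ] {f : X → E} (hf : Continuous f) : Integrable f μ :=
  hf.integrable_of_hasCompactSupport (.of_compactSpace f)

lemma integral_integral_norm_mul_norm_sub {G : Type*} [NormedAddCommGroup G] [CompactSpace G]
    [SecondCountableTopology G] [MeasurableSpace G] [BorelSpace G] (μ : Measure G)
    [IsFiniteMeasure μ] [μ.IsAddRightInvariant] :
    ∫ z, ∫ y, ‖y‖ * ‖y - z‖ ∂μ ∂μ = (∫ x, ‖x‖ ∂μ) ^ 2 := by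
  have htranslate (y : G) : ∫ z, ‖y - z‖ ∂μ = ∫ x, ‖x‖ ∂μ := by
    simp_rw [norm_sub_rev y]
    exact integral_sub_right_eq_self (‖·‖) y
  rw [integral_integral_swap (Continuous.integrable_of_compactSpace (by fun_prop))]
  simp only [integral_const_mul, htranslate, integral_mul_const]
  ring

namespace PadicInt

variable {p : ℕ} [Fact p.Prime]

lemma isOpen_norm_lt_one : IsOpen {x : ℤ_[p] | ‖x‖ < 1} :=
  isOpen_lt continuous_norm continuous_const

lemma coe_ker_toZMod :
    ((toZMod : ℤ_[p] →+* ZMod p) : ℤ_[p] →+ ZMod p).ker = {x : ℤ_[p] | ‖x‖ < 1} := by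
  ext x
  simp [← RingHom.mem_ker, ker_toZMod, ← mem_nonunits]

lemma index_ker_toZMod : ((toZMod : ℤ_[p] →+* ZMod p) : ℤ_[p] →+ ZMod p).ker.index = p := by
  rw [AddSubgroup.index_ker, AddMonoidHom.range_eq_top.mpr (ZMod.ringHom_surjective toZMod)]
  simp

lemma range_p_mul : range ((p : ℤ_[p]) * ·) = {x | ‖x‖ < 1} := by
  ext x
  simp [norm_lt_one_iff_dvd, dvd_def, eq_comm]

lemma norm_sub_p_mul_of_norm_eq_one {x : ℤ_[p]} (hx : ‖x‖ = 1) (z : ℤ_[p]) :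
    ‖x - p * z‖ = 1 := by
  have hpz : ‖-((p : ℤ_[p]) * z)‖ < 1 := by
    rw [norm_neg, norm_lt_one_iff_dvd]
    exact dvd_mul_right _ _
  rw [sub_eq_add_neg, IsUltrametricDist.norm_add_eq_max_of_norm_ne_norm (by linarith), hx,
    max_eq_left hpz.le]

variable [MeasurableSpace ℤ_[p]] [BorelSpace ℤ_[p]]

lemma measurableEmbedding_mul_left {a : ℤ_[p]} (ha : a ≠ 0) : MeasurableEmbedding (a * ·) :=
  ((continuous_const_mul a).isClosedEmbedding (mul_right_injective₀ ha)).measurableEmbedding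

lemma natCast_mul_measure_norm_lt_one (μ : Measure ℤ_[p]) [μ.IsAddLeftInvariant] :
    p * μ {x | ‖x‖ < 1} = μ univ := by
  let H := ((toZMod : ℤ_[p] →+* ZMod p) : ℤ_[p] →+ ZMod p).ker
  have : H.FiniteIndex := ⟨index_ker_toZMod.trans_ne (Fact.out : p.Prime).ne_zero⟩
  have hH : MeasurableSet (H : Set ℤ_[p]) := by
    rw [coe_ker_toZMod]
    exact isOpen_norm_lt_one.measurableSet
  simpa [H, index_ker_toZMod, coe_ker_toZMod] using H.index_mul_measure hH μ

lemma measureReal_norm_lt_one (μ : Measure ℤ_[p]) [μ.IsAddLeftInvariant] [IsProbabilityMeasure μ] :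
    μ.real {x | ‖x‖ < 1} = (p : ℝ)⁻¹ := by
  have h := natCast_mul_measure_norm_lt_one μ
  rw [measure_univ] at h
  rw [measureReal_def, ENNReal.eq_inv_of_mul_eq_one_left ((mul_comm _ _).trans h)]
  simp

lemma comap_p_mul (μ : Measure ℤ_[p]) [μ.IsAddHaarMeasure] :
    μ.comap ((p : ℤ_[p]) * ·) = (p : ℝ≥0∞)⁻¹ • μ := by
  have he : MeasurableEmbedding ((p : ℤ_[p]) * ·) :=
    measurableEmbedding_mul_left (Nat.cast_ne_zero.mpr (Fact.out : p.Prime).ne_zero)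
  have : (μ.comap ((p : ℤ_[p]) * ·)).IsAddLeftInvariant :=
    Measure.IsAddLeftInvariant.comap μ (f := AddMonoidHom.mulLeft (p : ℤ_[p])) he
  -- On the compact group `ℤ_[p]` an invariant measure is determined by its total mass.
  rw [Measure.addHaarMeasure_unique (μ.comap _) ⊤]
  conv_rhs => rw [Measure.addHaarMeasure_unique μ ⊤, smul_smul]
  congr 1
  simp only [TopologicalSpace.PositiveCompacts.coe_top, he.comap_apply, image_univ, range_p_mul,
    ← natCast_mul_measure_norm_lt_one μ]
  rw [ENNReal.inv_mul_cancel_left (by exact_mod_cast (Fact.out : p.Prime).ne_zero)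
    (ENNReal.natCast_ne_top p)]

lemma setIntegral_norm_lt_one (μ : Measure ℤ_[p]) [μ.IsAddHaarMeasure] (f : ℤ_[p] → ℝ) :
    ∫ x in {x | ‖x‖ < 1}, f x ∂μ = (p : ℝ)⁻¹ * ∫ y, f (p * y) ∂μ := by
  have he : MeasurableEmbedding ((p : ℤ_[p]) * ·) :=
    measurableEmbedding_mul_left (Nat.cast_ne_zero.mpr (Fact.out : p.Prime).ne_zero)
  rw [← range_p_mul, ← he.map_comap μ, he.integral_map, comap_p_mul, integral_smul_measure]
  simp

variable (μ : Measure ℤ_[p]) [μ.IsAddHaarMeasure] [IsProbabilityMeasure μ]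

lemma integral_eq_of_forall_norm_eq_one {f : ℤ_[p] → ℝ} (hf : Integrable f μ) {c : ℝ}
    (hc : ∀ x, ‖x‖ = 1 → f x = c) :
    ∫ x, f x ∂μ = (1 - (p : ℝ)⁻¹) * c + (p : ℝ)⁻¹ * ∫ y, f (p * y) ∂μ := by
  have hS := (isOpen_norm_lt_one (p := p)).measurableSet
  have hunits : ∫ x in {x : ℤ_[p] | ‖x‖ < 1}ᶜ, f x ∂μ = (1 - (p : ℝ)⁻¹) * c := by
    rw [setIntegral_congr_fun hS.compl fun x hx => hc x ((norm_le_one x).antisymm (not_lt.mp hx)),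
      setIntegral_const, probReal_compl_eq_one_sub hS, measureReal_norm_lt_one, smul_eq_mul]
  rw [← integral_add_compl hS hf, hunits, setIntegral_norm_lt_one, add_comm]

lemma integral_norm : ∫ x, ‖x‖ ∂μ = p / (p + 1) := by
  have h := integral_eq_of_forall_norm_eq_one μ continuous_norm.integrable_of_compactSpace
    (c := 1) fun _ hx => hx
  simp only [norm_mul, norm_p, integral_const_mul, mul_one] at h
  have hp : (1 : ℝ) < p := by exact_mod_cast (Fact.out : p.Prime).one_lt
  field_simp at h ⊢
  nlinarith

lemma integral_norm_mul_sub_p_mul (z : ℤ_[p]) :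
    ∫ x, ‖x * (x - p * z)‖ ∂μ = (1 - (p : ℝ)⁻¹) + (p : ℝ)⁻¹ ^ 3 * ∫ y, ‖y‖ * ‖y - z‖ ∂μ := by
  rw [integral_eq_of_forall_norm_eq_one μ (Continuous.integrable_of_compactSpace (by fun_prop))
    (c := 1) fun x hx => by rw [norm_mul, hx, norm_sub_p_mul_of_norm_eq_one hx, one_mul]]
  have hscale (y : ℤ_[p]) : ‖p * y * (p * y - p * z)‖ = (p : ℝ)⁻¹ ^ 2 * (‖y‖ * ‖y - z‖) := by
    rw [← mul_sub, norm_mul, norm_mul, norm_mul, norm_p]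
    ring
  simp only [hscale, integral_const_mul]
  ring

end PadicInt

open PadicInt in
/-- For any prime `p`,
`∫_{ℤ_p²} |(x₁+x₂)(x₁−(p−1)x₂)|_p dx₁dx₂ = (p²+p−1)/(p+1)²`
with respect to the product Haar probability measure on `ℤ_p²`. -/
theorem stmt18 (p : ℕ) [Fact p.Prime]
    [MeasurableSpace ℤ_[p]] [BorelSpace ℤ_[p]]
    (μ : Measure ℤ_[p]) [μ.IsAddHaarMeasure] [IsProbabilityMeasure μ] :
    ∫ x : ℤ_[p] × ℤ_[p], ‖(x.1 + x.2) * (x.1 - ((p : ℤ_[p]) - 1) * x.2)‖ ∂(μ.prod μ) =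
      ((p : ℝ) ^ 2 + (p : ℝ) - 1) / ((p : ℝ) + 1) ^ 2 := by
  have hinner (z : ℤ_[p]) : ∫ x, ‖(x + z) * (x - ((p : ℤ_[p]) - 1) * z)‖ ∂μ =
      (1 - (p : ℝ)⁻¹) + (p : ℝ)⁻¹ ^ 3 * ∫ y, ‖y‖ * ‖y - z‖ ∂μ := by
    have hshift (x : ℤ_[p]) :
        (x + z) * (x - ((p : ℤ_[p]) - 1) * z) = (x + z) * (x + z - p * z) := by
      ring
    simp_rw [hshift]
    exact (integral_add_right_eq_self (fun x => ‖x * (x - p * z)‖) z).trans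
      (integral_norm_mul_sub_p_mul μ z)
  have hconv : Integrable (fun z => ∫ y, ‖y‖ * ‖y - z‖ ∂μ) μ :=
    (Continuous.integrable_of_compactSpace (μ := μ.prod μ)
      (f := fun x : ℤ_[p] × ℤ_[p] => ‖x.2‖ * ‖x.2 - x.1‖) (by fun_prop)).integral_prod_left
  rw [integral_prod_symm _ (Continuous.integrable_of_compactSpace (by fun_prop))]
  simp only [hinner]
  rw [integral_add (integrable_const _) (hconv.const_mul _), integral_const, probReal_univ,
    one_smul, integral_const_mul, integral_integral_norm_mul_norm_sub, integral_norm]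
  have hp : (p : ℝ) ≠ 0 := by exact_mod_cast (Fact.out : p.Prime).ne_zero
  field_simp
  ring
end
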